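/- Let T be a self-adjoint linear endomorphism of V and let l_1, l_2 ∈ V be linearly independent null vectors. If either (a) T(w) = 0 for every w ∈ {l_1}⊥ and T(w) = 0 for every w ∈ {l_2}⊥, or (b) for each i ∈ {1,2} the range of T is contained in {l_i}⊥ and T maps {l_i}⊥ into ℝ·l_i, then T = 0. -/

import Mathlib

/-!
Two linearly independent null vectors of a Lorentzian space are never orthogonal: on the kernel of the
time coordinate the form is positive definite, and a suitable combination of `l₁, l₂` kills
the time coordinate while staying null if `g l₁ l₂ = 0`. Given `g l₁ l₂ ≠ 0`, in case (b) the
condition `range T ⊆ {l₂}⊥` forces the multiple of `l₁` in `T ({l₁}⊥)` to vanish, which reduces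
to case (a); and in case (a) `V = {l₁}⊥ + ℝ l₂` with `l₂ ∈ {l₂}⊥`, so `T = 0`.
-/

section Orthogonal

variable {V : Type*} [AddCommGroup V] [Module ℝ V] {g : V →ₗ[ℝ] V →ₗ[ℝ] ℝ} {T : V →ₗ[ℝ] V} {l₁ l₂ : V}

theorem apply_eq_zero_of_mapsTo_span_of_range_orthogonal (hne : g l₂ l₁ ≠ 0)
    (hrange : ∀ x : V, g l₂ (T x) = 0) (hmaps : ∀ w : V, g l₁ w = 0 → ∃ c : ℝ, T w = c • l₁)
    {w : V} (hw : g l₁ w = 0) : T w = 0 := by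
  obtain ⟨c, hc⟩ := hmaps w hw
  have hc0 : c * g l₂ l₁ = 0 := by simpa [hc, mul_comm] using hrange w
  rw [hc, (mul_eq_zero.mp hc0).resolve_right hne, zero_smul]

theorem eq_zero_of_orthogonal_le_ker (hne : g l₁ l₂ ≠ 0)
    (h₁ : ∀ w : V, g l₁ w = 0 → T w = 0) (h₂ : T l₂ = 0) : T = 0 := by
  ext v
  have hw : g l₁ (v - (g l₁ v / g l₁ l₂) • l₂) = 0 := by
    rw [map_sub, map_smul, smul_eq_mul, div_mul_cancel₀ _ hne, sub_self]
  simpa [h₂] using h₁ _ hw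

end Orthogonal

section Lorentz

variable {V : Type*} [AddCommGroup V] [Module ℝ V] {n : ℕ}

def lorentzSign (i : Fin n) : ℝ := if (i : ℕ) = 0 then -1 else 1

def IsLorentzBasis (g : V →ₗ[ℝ] V →ₗ[ℝ] ℝ) (b : Module.Basis (Fin n) ℝ V) : Prop :=
  ∀ i j : Fin n, g (b i) (b j) = if i = j then lorentzSign i else 0

namespace IsLorentzBasis

variable {g : V →ₗ[ℝ] V →ₗ[ℝ] ℝ} {b : Module.Basis (Fin n) ℝ V}

theorem apply_basis_left (hb : IsLorentzBasis g b) (i : Fin n) (w : V) :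
    g (b i) w = lorentzSign i * b.repr w i := by
  conv_lhs => rw [← b.sum_repr w]
  rw [map_sum, Finset.sum_eq_single i]
  · rw [map_smul, smul_eq_mul, hb, if_pos rfl, mul_comm]
  · intro j _ hj
    rw [map_smul, smul_eq_mul, hb, if_neg (Ne.symm hj), mul_zero]
  · simp

theorem apply_eq_sum (hb : IsLorentzBasis g b) (v w : V) :
    g v w = ∑ i, lorentzSign i * b.repr v i * b.repr w i := by
  conv_lhs => rw [← b.sum_repr v]
  rw [map_sum, LinearMap.sum_apply]
  refine Finset.sum_congr rfl fun i _ => ?_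
  rw [map_smul, LinearMap.smul_apply, smul_eq_mul, hb.apply_basis_left]
  ring

theorem apply_comm (hb : IsLorentzBasis g b) (v w : V) : g v w = g w v := by
  simp only [hb.apply_eq_sum, mul_right_comm _ (b.repr v _)]

theorem eq_zero_of_apply_self_eq_zero [NeZero n] (hb : IsLorentzBasis g b) {v : V}
    (h0 : b.repr v 0 = 0) (hv : g v v = 0) : v = 0 := by
  have hterm : ∀ i : Fin n, lorentzSign i * b.repr v i * b.repr v i = (b.repr v i) ^ 2 := by
    intro i
    by_cases hi : i = 0
    · simp [hi, h0]
    · simp [lorentzSign, Fin.val_eq_zero_iff, hi, sq]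
  rw [hb.apply_eq_sum, Finset.sum_congr rfl fun i _ => hterm i,
    Finset.sum_eq_zero_iff_of_nonneg fun i _ => sq_nonneg _] at hv
  exact b.repr.map_eq_zero_iff.mp <|
    Finsupp.ext fun i => pow_eq_zero_iff two_ne_zero |>.mp (hv i (Finset.mem_univ i))

theorem apply_ne_zero_of_linearIndependent [NeZero n] (hb : IsLorentzBasis g b) {l₁ l₂ : V}
    (hl₁ : g l₁ l₁ = 0) (hl₂ : g l₂ l₂ = 0) (hind : LinearIndependent ℝ ![l₁, l₂]) :
    g l₁ l₂ ≠ 0 := by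
  intro h₁₂
  set a := b.repr l₁ 0
  set c := b.repr l₂ 0
  have ha : a ≠ 0 := fun ha => hind.ne_zero 0 (hb.eq_zero_of_apply_self_eq_zero ha hl₁)
  have h0 : b.repr (c • l₁ - a • l₂) 0 = 0 := by
    simp only [map_sub, map_smul, Finsupp.sub_apply, Finsupp.smul_apply, smul_eq_mul, a, c]
    ring
  have hnull : g (c • l₁ - a • l₂) (c • l₁ - a • l₂) = 0 := by
    simp only [map_sub, map_smul, LinearMap.sub_apply, LinearMap.smul_apply, smul_eq_mul]
    rw [hl₁, hl₂, h₁₂, hb.apply_comm l₂ l₁, h₁₂]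
    ring
  have hcomb := hb.eq_zero_of_apply_self_eq_zero h0 hnull
  rw [sub_eq_add_neg, ← neg_smul] at hcomb
  exact ha (neg_eq_zero.mp (LinearIndependent.pair_iff.mp hind c (-a) hcomb).2)

end IsLorentzBasis

end Lorentz

theorem stmt3_general {V : Type*} [AddCommGroup V] [Module ℝ V]
    {n : ℕ} (hn : 2 ≤ n)
    (g : V →ₗ[ℝ] V →ₗ[ℝ] ℝ)
    (b : Module.Basis (Fin n) ℝ V)
    (hb : ∀ i j : Fin n, g (b i) (b j) =
      if i = j then (if (i : ℕ) = 0 then (-1 : ℝ) else 1) else 0)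
    (T : V →ₗ[ℝ] V)
    (l₁ l₂ : V)
    (hl₁ : l₁ ≠ 0 ∧ g l₁ l₁ = 0) (hl₂ : l₂ ≠ 0 ∧ g l₂ l₂ = 0)
    (hind : LinearIndependent ℝ ![l₁, l₂])
    (hcase :
      ((∀ w : V, g l₁ w = 0 → T w = 0) ∧ (∀ w : V, g l₂ w = 0 → T w = 0)) ∨
      (((∀ x : V, g l₁ (T x) = 0) ∧ (∀ w : V, g l₁ w = 0 → ∃ c : ℝ, T w = c • l₁)) ∧
       ((∀ x : V, g l₂ (T x) = 0) ∧ (∀ w : V, g l₂ w = 0 → ∃ c : ℝ, T w = c • l₂)))) :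
    T = 0 := by
  have : NeZero n := ⟨by omega⟩
  have hb : IsLorentzBasis g b := hb
  have h₁₂ : g l₁ l₂ ≠ 0 := hb.apply_ne_zero_of_linearIndependent hl₁.2 hl₂.2 hind
  have h₂₁ : g l₂ l₁ ≠ 0 := by rwa [hb.apply_comm]
  obtain ⟨h₁, h₂⟩ : (∀ w : V, g l₁ w = 0 → T w = 0) ∧ (∀ w : V, g l₂ w = 0 → T w = 0) := by
    rcases hcase with hker | ⟨⟨hrange₁, hmaps₁⟩, hrange₂, hmaps₂⟩
    · exact hker
    · exact ⟨fun _ => apply_eq_zero_of_mapsTo_span_of_range_orthogonal h₂₁ hrange₂ hmaps₁,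
        fun _ => apply_eq_zero_of_mapsTo_span_of_range_orthogonal h₁₂ hrange₁ hmaps₂⟩
  exact eq_zero_of_orthogonal_le_ker h₁₂ h₁ (h₂ l₂ hl₂.2)

/-- If `T` is a self-adjoint endomorphism of a Lorentzian vector space `(V, g)`
and `l₁, l₂` are linearly independent null vectors such that either
(a) `T` annihilates both `{l₁}⊥` and `{l₂}⊥`, or
(b) for each `i`, the range of `T` is contained in `{lᵢ}⊥` and `T` maps `{lᵢ}⊥` into `ℝ • lᵢ`,
then `T = 0`. -/
theorem stmt3 {V : Type*} [AddCommGroup V] [Module ℝ V]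
    {n : ℕ} (hn : 2 ≤ n)
    (g : V →ₗ[ℝ] V →ₗ[ℝ] ℝ)
    (hg_symm : ∀ x y : V, g x y = g y x)
    (b : Module.Basis (Fin n) ℝ V)
    (hb : ∀ i j : Fin n, g (b i) (b j) =
      if i = j then (if (i : ℕ) = 0 then (-1 : ℝ) else 1) else 0)
    (T : V →ₗ[ℝ] V)
    (hT : ∀ x y : V, g (T x) y = g x (T y))
    (l₁ l₂ : V)
    (hl₁ : l₁ ≠ 0 ∧ g l₁ l₁ = 0) (hl₂ : l₂ ≠ 0 ∧ g l₂ l₂ = 0)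
    (hind : LinearIndependent ℝ ![l₁, l₂])
    (hcase :
      ((∀ w : V, g l₁ w = 0 → T w = 0) ∧ (∀ w : V, g l₂ w = 0 → T w = 0)) ∨
      (((∀ x : V, g l₁ (T x) = 0) ∧ (∀ w : V, g l₁ w = 0 → ∃ c : ℝ, T w = c • l₁)) ∧
       ((∀ x : V, g l₂ (T x) = 0) ∧ (∀ w : V, g l₂ w = 0 → ∃ c : ℝ, T w = c • l₂)))) :
    T = 0 :=
  stmt3_general hn g b hb T l₁ l₂ hl₁ hl₂ hind hcase
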